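/- Define r(θ) = θ·i(θ) where i(θ) is the Fisher information of the noncentral chi-squared family χ²_1(2θ). Then lim_{θ→0} r(θ) = 0, lim_{θ→∞} r(θ) = 1/2, and r is strictly increasing on (0,∞). -/

import Mathlib

open MeasureTheory Set Real Filter

/-- Density of the noncentral chi-squared distribution χ²₁(2θ). -/
noncomputable def g1 (θ x : ℝ) : ℝ :=
  (2 * Real.pi * x) ^ (-(1:ℝ)/2) * Real.exp (-θ - x / 2) * Real.cosh (Real.sqrt (2 * θ * x))

/-- Fisher information of the family {χ²₁(2θ) : θ > 0}. -/
noncomputable def fisherInfo (θ : ℝ) : ℝ :=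
  (1 / (2 * θ)) *
    (∫ x in Set.Ioi (0:ℝ), x * Real.tanh (Real.sqrt (2 * θ * x)) ^ 2 * g1 θ x) - 1

/-- r(θ) = θ·i(θ) for the noncentral chi-squared family. -/
noncomputable def r (θ : ℝ) : ℝ := θ * fisherInfo θ

/-!
Substituting `x = u²` turns `2u · g1 θ (u²)` into `2e^{-θ}/√(2π) · e^{-u²/2} cosh(√(2θ) u)`, and
`tanh² · cosh = cosh - sech`. The `cosh` part is a second moment of two shifted standard Gaussians
and gives `1 + 2θ`, the mean of `χ²₁(2θ)`; hence `r θ = (1 - s θ) / 2` with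
`s θ = 2e^{-θ}/√(2π) · ∫₀^∞ u² e^{-u²/2} sech(√(2θ) u) du`.
That integral is continuous in `√(2θ)` by dominated convergence, equals `√(2π)/2` at `0`, and is
positive, nonincreasing and bounded by `√(2π)/2` on `[0, ∞)`. So `s → 1` at `0`, `0 ≤ s ≤ e^{-θ}`,
and `s` is strictly decreasing thanks to the factor `e^{-θ}`.
-/

open ProbabilityTheory
open scoped NNReal

lemma sqrt_two_pi_mul_exp_mul_gaussianPDFReal (b x : ℝ) :
    √(2 * π) * exp (b ^ 2 / 2) * gaussianPDFReal b 1 x = exp (-x ^ 2 / 2) * exp (b * x) := by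
  have hc : √(2 * π) ≠ 0 := by positivity
  simp only [gaussianPDFReal, NNReal.coe_one, mul_one]
  rw [mul_right_comm, mul_assoc, mul_assoc, mul_inv_cancel_left₀ hc, ← exp_add, ← exp_add]
  congr 1
  ring

lemma integral_gaussianPDFReal_mul_sq (μ : ℝ) {v : ℝ≥0} (hv : v ≠ 0) :
    ∫ x, gaussianPDFReal μ v x * x ^ 2 = v + μ ^ 2 := by
  have h := variance_eq_sub (memLp_id_gaussianReal (μ := μ) (v := v) 2)
  simp only [variance_id_gaussianReal, Pi.pow_apply, id_eq] at h
  rw [integral_id_gaussianReal, integral_gaussianReal_eq_integral_smul hv] at h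
  simp only [smul_eq_mul] at h
  linarith

lemma integral_sq_mul_exp_mul_cosh (b : ℝ) :
    ∫ x, x ^ 2 * exp (-x ^ 2 / 2) * cosh (b * x) = √(2 * π) * (1 + b ^ 2) * exp (b ^ 2 / 2) := by
  have hint (b : ℝ) : Integrable fun x ↦ gaussianPDFReal b 1 x * x ^ 2 :=
    .of_integral_ne_zero (by rw [integral_gaussianPDFReal_mul_sq _ one_ne_zero]; positivity)
  have hsplit (x : ℝ) : x ^ 2 * exp (-x ^ 2 / 2) * cosh (b * x) = √(2 * π) * exp (b ^ 2 / 2) / 2 *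
      (gaussianPDFReal b 1 x * x ^ 2 + gaussianPDFReal (-b) 1 x * x ^ 2) := by
    have hb := sqrt_two_pi_mul_exp_mul_gaussianPDFReal b x
    have hnb := sqrt_two_pi_mul_exp_mul_gaussianPDFReal (-b) x
    rw [neg_sq, neg_mul] at hnb
    rw [cosh_eq]
    linear_combination (-x ^ 2 / 2) * (hb + hnb)
  simp only [hsplit]
  rw [integral_const_mul, integral_add (hint b) (hint (-b)),
    integral_gaussianPDFReal_mul_sq _ one_ne_zero, integral_gaussianPDFReal_mul_sq _ one_ne_zero,
    NNReal.coe_one, neg_sq]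
  ring

lemma integrable_sq_mul_exp_mul_cosh (b : ℝ) :
    Integrable fun x ↦ x ^ 2 * exp (-x ^ 2 / 2) * cosh (b * x) :=
  .of_integral_ne_zero (by rw [integral_sq_mul_exp_mul_cosh]; positivity)

lemma integral_Ioi_sq_mul_exp_mul_cosh (b : ℝ) :
    ∫ x in Ioi 0, x ^ 2 * exp (-x ^ 2 / 2) * cosh (b * x) =
      √(2 * π) * (1 + b ^ 2) * exp (b ^ 2 / 2) / 2 := by
  have heven (x : ℝ) : |x| ^ 2 * exp (-|x| ^ 2 / 2) * cosh (b * |x|) =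
      x ^ 2 * exp (-x ^ 2 / 2) * cosh (b * x) := by
    rcases abs_cases x with ⟨hx, -⟩ | ⟨hx, -⟩ <;> simp [hx, mul_neg, cosh_neg]
  have h := integral_comp_abs (f := fun x ↦ x ^ 2 * exp (-x ^ 2 / 2) * cosh (b * x))
  simp only [heven, integral_sq_mul_exp_mul_cosh] at h
  linarith

lemma integral_Ioi_sq_mul_exp : ∫ x in Ioi 0, x ^ 2 * exp (-x ^ 2 / 2) = √(2 * π) / 2 := by
  simpa using integral_Ioi_sq_mul_exp_mul_cosh 0

lemma integral_Ioi_comp_sq {E : Type*} [NormedAddCommGroup E] [NormedSpace ℝ E] (g : ℝ → E) :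
    ∫ x in Ioi 0, g x = ∫ u in Ioi 0, (2 * u) • g (u ^ 2) := by
  rw [← integral_comp_rpow_Ioi g two_ne_zero]
  refine setIntegral_congr_fun measurableSet_Ioi fun u _ ↦ ?_
  norm_num [rpow_two]

noncomputable def sechGaussMoment (a : ℝ) : ℝ :=
  ∫ u in Ioi 0, u ^ 2 * exp (-u ^ 2 / 2) / cosh (a * u)

lemma sq_mul_exp_div_cosh_le (a u : ℝ) :
    u ^ 2 * exp (-u ^ 2 / 2) / cosh (a * u) ≤ u ^ 2 * exp (-u ^ 2 / 2) :=
  div_le_self (by positivity) (one_le_cosh _)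

lemma integrableOn_sq_mul_exp : IntegrableOn (fun u ↦ u ^ 2 * exp (-u ^ 2 / 2)) (Ioi 0) := by
  simpa using (integrable_sq_mul_exp_mul_cosh 0).integrableOn

lemma integrableOn_sq_mul_exp_div_cosh (a : ℝ) :
    IntegrableOn (fun u ↦ u ^ 2 * exp (-u ^ 2 / 2) / cosh (a * u)) (Ioi 0) := by
  refine Integrable.mono' integrableOn_sq_mul_exp
    (Continuous.aestronglyMeasurable (by fun_prop (disch := exact fun _ ↦ (cosh_pos _).ne')))
    (ae_of_all _ fun u ↦ ?_)
  rw [norm_of_nonneg (by positivity)]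
  exact sq_mul_exp_div_cosh_le a u

lemma sechGaussMoment_zero : sechGaussMoment 0 = √(2 * π) / 2 := by
  simp only [sechGaussMoment, zero_mul, cosh_zero, div_one]
  exact integral_Ioi_sq_mul_exp

lemma sechGaussMoment_le (a : ℝ) : sechGaussMoment a ≤ √(2 * π) / 2 := by
  rw [← sechGaussMoment_zero]
  refine setIntegral_mono (integrableOn_sq_mul_exp_div_cosh a)
    (integrableOn_sq_mul_exp_div_cosh 0) fun u ↦ ?_
  simpa using sq_mul_exp_div_cosh_le a u

lemma sechGaussMoment_antitoneOn : AntitoneOn sechGaussMoment (Ici 0) := by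
  intro a ha b hb hab
  refine setIntegral_mono_on (integrableOn_sq_mul_exp_div_cosh b)
    (integrableOn_sq_mul_exp_div_cosh a) measurableSet_Ioi fun u hu ↦ ?_
  have hu : 0 ≤ u := le_of_lt hu
  gcongr
  rw [cosh_le_cosh, abs_of_nonneg (mul_nonneg ha hu),
    abs_of_nonneg (mul_nonneg (le_trans ha hab) hu)]
  exact mul_le_mul_of_nonneg_right hab hu

lemma sechGaussMoment_pos (a : ℝ) : 0 < sechGaussMoment a := by
  have hpos : ∀ u ∈ Ioi (0 : ℝ), 0 < u ^ 2 * exp (-u ^ 2 / 2) / cosh (a * u) := fun u hu ↦ by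
    have := cosh_pos (a * u)
    have : (0 : ℝ) < u := hu
    positivity
  rw [sechGaussMoment, setIntegral_pos_iff_support_of_nonneg_ae
    ((ae_restrict_iff' measurableSet_Ioi).2 (ae_of_all _ fun u hu ↦ (hpos u hu).le))
    (integrableOn_sq_mul_exp_div_cosh a)]
  refine lt_of_lt_of_le ?_ (measure_mono fun u hu ↦ ⟨(hpos u hu).ne', hu⟩)
  simp

@[fun_prop]
lemma continuous_sechGaussMoment : Continuous sechGaussMoment :=
  continuous_of_dominated (fun _ ↦ Continuous.aestronglyMeasurable
    (by fun_prop (disch := exact fun _ ↦ (cosh_pos _).ne')))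
    (fun a ↦ ae_of_all _ fun u ↦ by
      rw [norm_of_nonneg (by positivity)]; exact sq_mul_exp_div_cosh_le a u)
    integrableOn_sq_mul_exp
    (ae_of_all _ fun u ↦ by fun_prop (disch := exact fun _ ↦ (cosh_pos _).ne'))

lemma sqrt_mul_sq {c u : ℝ} (hc : 0 ≤ c) (hu : 0 ≤ u) : √(c * u ^ 2) = √c * u := by
  rw [sqrt_mul hc, sqrt_sq hu]

lemma two_mul_mul_g1_sq {θ u : ℝ} (hθ : 0 ≤ θ) (hu : 0 < u) :
    2 * u * g1 θ (u ^ 2) = 2 * exp (-θ) / √(2 * π) * exp (-u ^ 2 / 2) * cosh (√(2 * θ) * u) := by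
  have hpow : (2 * π * u ^ 2) ^ (-(1 : ℝ) / 2) = (√(2 * π) * u)⁻¹ := by
    rw [show -(1 : ℝ) / 2 = -(1 / 2) by norm_num, rpow_neg (by positivity), ← sqrt_eq_rpow,
      sqrt_mul_sq (by positivity) hu.le]
  rw [g1, hpow, sqrt_mul_sq (by positivity) hu.le, sub_eq_add_neg, exp_add]
  field_simp

lemma tanh_sq_mul_cosh (y : ℝ) : tanh y ^ 2 * cosh y = cosh y - 1 / cosh y := by
  have := (cosh_pos y).ne'
  rw [tanh_eq_sinh_div_cosh, div_pow, sinh_sq]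
  field_simp

/-- The paper's `s θ`, written after the substitution `x = u²`. -/
noncomputable def sechMoment (θ : ℝ) : ℝ :=
  2 * exp (-θ) / √(2 * π) * sechGaussMoment √(2 * θ)

lemma setIntegral_mul_tanh_sq_mul_g1 {θ : ℝ} (hθ : 0 ≤ θ) :
    ∫ x in Ioi 0, x * tanh √(2 * θ * x) ^ 2 * g1 θ x = 1 + 2 * θ - sechMoment θ := by
  have hpt : EqOn (fun u ↦ (2 * u) • (u ^ 2 * tanh √(2 * θ * u ^ 2) ^ 2 * g1 θ (u ^ 2)))
      (fun u ↦ 2 * exp (-θ) / √(2 * π) * (u ^ 2 * exp (-u ^ 2 / 2) * cosh (√(2 * θ) * u) -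
        u ^ 2 * exp (-u ^ 2 / 2) / cosh (√(2 * θ) * u))) (Ioi 0) := fun u (hu : 0 < u) ↦ by
    dsimp only
    rw [smul_eq_mul, sqrt_mul_sq (by positivity) hu.le]
    linear_combination (u ^ 2 * tanh (√(2 * θ) * u) ^ 2) * two_mul_mul_g1_sq hθ hu +
      (2 * exp (-θ) / √(2 * π) * u ^ 2 * exp (-u ^ 2 / 2)) * tanh_sq_mul_cosh (√(2 * θ) * u)
  rw [integral_Ioi_comp_sq, setIntegral_congr_fun measurableSet_Ioi hpt, integral_const_mul,
    integral_sub (integrable_sq_mul_exp_mul_cosh _).integrableOn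
    (integrableOn_sq_mul_exp_div_cosh _), integral_Ioi_sq_mul_exp_mul_cosh, sq_sqrt (by positivity),
    sechMoment, ← sechGaussMoment, show 2 * θ / 2 = θ by ring, exp_neg]
  field_simp

lemma r_eq_one_sub_sechMoment_div_two {θ : ℝ} (hθ : 0 < θ) : r θ = (1 - sechMoment θ) / 2 := by
  rw [r, fisherInfo, setIntegral_mul_tanh_sq_mul_g1 hθ.le]
  field_simp
  ring

@[fun_prop]
lemma continuous_sechMoment : Continuous sechMoment := by
  unfold sechMoment
  fun_prop

lemma sechMoment_zero : sechMoment 0 = 1 := by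
  have : √(2 * π) ≠ 0 := by positivity
  rw [sechMoment, mul_zero, sqrt_zero, sechGaussMoment_zero, neg_zero, exp_zero]
  field_simp

lemma sechMoment_nonneg (θ : ℝ) : 0 ≤ sechMoment θ := by
  have := sechGaussMoment_pos √(2 * θ)
  unfold sechMoment
  positivity

lemma sechMoment_le_exp_neg (θ : ℝ) : sechMoment θ ≤ exp (-θ) :=
  calc sechMoment θ ≤ 2 * exp (-θ) / √(2 * π) * (√(2 * π) / 2) := by
        unfold sechMoment; gcongr; exact sechGaussMoment_le _
    _ = exp (-θ) := by field_simp

lemma sechMoment_strictAntiOn : StrictAntiOn sechMoment (Ici 0) := by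
  intro a (ha : 0 ≤ a) b (hb : 0 ≤ b) hab
  have hK : sechGaussMoment √(2 * b) ≤ sechGaussMoment √(2 * a) :=
    sechGaussMoment_antitoneOn (sqrt_nonneg _) (sqrt_nonneg _) (by gcongr)
  have := sechGaussMoment_pos √(2 * a)
  unfold sechMoment
  calc 2 * exp (-b) / √(2 * π) * sechGaussMoment √(2 * b)
      ≤ 2 * exp (-b) / √(2 * π) * sechGaussMoment √(2 * a) := by gcongr
    _ < 2 * exp (-a) / √(2 * π) * sechGaussMoment √(2 * a) := by gcongr

/-- r(θ) → 0 as θ → 0, r(θ) → 1/2 as θ → ∞, and r is strictly increasing on (0,∞). -/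
theorem r_limits_and_strictMono :
    Tendsto r (nhdsWithin 0 (Set.Ioi 0)) (nhds 0) ∧
    Tendsto r atTop (nhds (1 / 2)) ∧
    StrictMonoOn r (Set.Ioi 0) := by
  have hr : ∀ θ ∈ Ioi (0 : ℝ), (1 - sechMoment θ) / 2 = r θ :=
    fun θ hθ ↦ (r_eq_one_sub_sechMoment_div_two hθ).symm
  refine ⟨?_, ?_, ?_⟩
  · have h : Tendsto (fun θ ↦ (1 - sechMoment θ) / 2) (nhdsWithin 0 (Ioi 0))
        (nhds ((1 - sechMoment 0) / 2)) :=
      (Continuous.tendsto (by fun_prop) 0).mono_left nhdsWithin_le_nhds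
    rw [sechMoment_zero, sub_self, zero_div] at h
    exact h.congr' (eventually_nhdsWithin_of_forall hr)
  · have hs : Tendsto sechMoment atTop (nhds 0) :=
      squeeze_zero sechMoment_nonneg sechMoment_le_exp_neg tendsto_exp_neg_atTop_nhds_zero
    have h := (tendsto_const_nhds (x := (1 : ℝ)).sub hs).div_const 2
    rw [sub_zero] at h
    exact h.congr' ((eventually_gt_atTop 0).mono hr)
  · intro a ha b hb hab
    rw [← hr a ha, ← hr b hb]
    linarith [sechMoment_strictAntiOn (mem_Ici.2 (le_of_lt ha)) (mem_Ici.2 (le_of_lt hb)) hab]
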